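/- For every integer m ≥ 0 there exists a set P ⊂ [0,1)² of cardinality exactly 2^{2m+1} such that dist_H(p,q) ≥ 2^{-m} for all distinct p, q ∈ P. -/

import Mathlib

/-!
Take `N = 2m + 1` and the Hammersley set `{(x / 2^N, rev x / 2^N) : x < 2^N}`, where `rev`
reverses the `N` binary digits of `x`. If two of its points lie in a dyadic rectangle of sides
`2^a × 2^b`, then `x` and `y` agree in all binary digits from position `a + N` upward (first
coordinate) and in all digits below `-b` (second coordinate). When the area `2^(a+b)` is at most
`2^(-N)`, these two ranges cover all `N` digits, so the points coincide. Hence distinct points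
only share dyadic rectangles of area at least `2^(-2m)`.
-/

open MeasureTheory
open scoped ENNReal

/-- A dyadic interval `[k·2^n, (k+1)·2^n)`. -/
def IsDyadicInterval (I : Set ℝ) : Prop :=
  ∃ k n : ℤ, I = Set.Ico ((k : ℝ) * 2 ^ n) (((k : ℝ) + 1) * 2 ^ n)

/-- An axis-parallel dyadic rectangle in the plane. -/
def IsDyadicRect (R : Set (ℝ × ℝ)) : Prop :=
  ∃ I J : Set ℝ, IsDyadicInterval I ∧ IsDyadicInterval J ∧ R = I ×ˢ J

/-- `dist_H(p,q) = inf { |R|^{1/2} : R dyadic rectangle containing p and q }`. -/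
noncomputable def distH (p q : ℝ × ℝ) : ℝ≥0∞ :=
  sInf {v | ∃ R : Set (ℝ × ℝ), IsDyadicRect R ∧ p ∈ R ∧ q ∈ R ∧ v = volume R ^ (1 / 2 : ℝ)}

theorem Nat.testBit_eq_of_div_two_pow_eq {x y d k : ℕ} (h : x / 2 ^ d = y / 2 ^ d)
    (hk : d ≤ k) : x.testBit k = y.testBit k := by
  obtain ⟨k, rfl⟩ := Nat.exists_eq_add_of_le' hk
  rw [← Nat.testBit_div_two_pow, h, Nat.testBit_div_two_pow]

theorem BitVec.eq_of_div_two_pow_eq_of_reverse {N : ℕ} {x y : BitVec N} {a b : ℤ}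
    (hab : a + b ≤ N) (hx : x.toNat / 2 ^ a.toNat = y.toNat / 2 ^ a.toNat)
    (hy : x.reverse.toNat / 2 ^ b.toNat = y.reverse.toNat / 2 ^ b.toNat) : x = y := by
  refine BitVec.eq_of_getLsbD_eq fun k hk => ?_
  by_cases hak : a.toNat ≤ k
  · simpa only [BitVec.testBit_toNat] using Nat.testBit_eq_of_div_two_pow_eq hx hak
  · have := Nat.testBit_eq_of_div_two_pow_eq hy (k := N - 1 - k) (by omega)
    rw [BitVec.testBit_toNat, BitVec.testBit_toNat, BitVec.getLsbD_reverse,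
      BitVec.getLsbD_reverse, BitVec.getMsbD, BitVec.getMsbD,
      show N - 1 - (N - 1 - k) = k by omega] at this
    simpa [show N - 1 - k < N by omega] using this

theorem Int.floor_div_eq_of_mem_Ico {x c : ℝ} {k : ℤ} (hc : 0 < c)
    (hx : x ∈ Set.Ico (k * c) ((k + 1) * c)) : ⌊x / c⌋ = k := by
  rw [Int.floor_eq_iff, le_div_iff₀ hc, div_lt_iff₀ hc]
  exact hx

theorem Nat.div_two_pow_toNat_eq_of_floor_eq {i j : ℕ} {c : ℤ}
    (h : ⌊(i : ℝ) / 2 ^ c⌋ = ⌊(j : ℝ) / 2 ^ c⌋) : i / 2 ^ c.toNat = j / 2 ^ c.toNat := by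
  rcases le_or_gt 0 c with hc | hc
  · obtain ⟨d, rfl⟩ := Int.eq_ofNat_of_zero_le hc
    have floor_eq : ∀ n : ℕ, ⌊(n : ℝ) / 2 ^ (d : ℤ)⌋ = ((n / 2 ^ d : ℕ) : ℤ) := fun n => by
      rw [zpow_natCast, ← Int.natCast_floor_eq_floor (by positivity), ← Nat.cast_ofNat,
        ← Nat.cast_pow, Nat.floor_div_eq_div]
    simpa only [floor_eq, Nat.cast_inj, Int.toNat_natCast] using h
  · obtain ⟨d, rfl⟩ : ∃ d : ℕ, c = -d := ⟨(-c).toNat, by omega⟩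
    have floor_eq : ∀ n : ℕ, ⌊(n : ℝ) / 2 ^ (-(d : ℤ))⌋ = ((n * 2 ^ d : ℕ) : ℤ) := fun n => by
      rw [zpow_neg, div_inv_eq_mul, zpow_natCast, ← Int.floor_natCast (R := ℝ)]
      push_cast
      rfl
    have hij : i * 2 ^ d = j * 2 ^ d := by simpa only [floor_eq, Nat.cast_inj] using h
    rw [Nat.eq_of_mul_eq_mul_right (by positivity) hij]

def dyadicInterval (k a : ℤ) : Set ℝ := Set.Ico (k * 2 ^ a) ((k + 1) * 2 ^ a)

theorem div_two_pow_eq_of_mem_dyadicInterval {N i j : ℕ} {k a : ℤ}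
    (hi : (i : ℝ) / 2 ^ N ∈ dyadicInterval k a) (hj : (j : ℝ) / 2 ^ N ∈ dyadicInterval k a) :
    i / 2 ^ (a + N).toNat = j / 2 ^ (a + N).toNat := by
  have rescale : ∀ n : ℕ, (n : ℝ) / 2 ^ N / 2 ^ a = n / 2 ^ (a + N) := fun n => by
    rw [div_div, zpow_add₀ two_ne_zero, zpow_natCast, mul_comm]
  apply Nat.div_two_pow_toNat_eq_of_floor_eq
  rw [← rescale, ← rescale, Int.floor_div_eq_of_mem_Ico (by positivity) hi,
    Int.floor_div_eq_of_mem_Ico (by positivity) hj]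

theorem volume_dyadicInterval_prod (k a l b : ℤ) :
    volume (dyadicInterval k a ×ˢ dyadicInterval l b) = ENNReal.ofReal (2 ^ (a + b)) := by
  rw [Measure.volume_eq_prod, Measure.prod_prod, dyadicInterval, dyadicInterval,
    Real.volume_Ico, Real.volume_Ico, add_one_mul, add_sub_cancel_left, add_one_mul,
    add_sub_cancel_left, ← ENNReal.ofReal_mul (by positivity), zpow_add₀ two_ne_zero]

theorem ofReal_two_zpow_le_distH {p q : ℝ × ℝ} {m : ℤ}
    (h : ∀ k a l b : ℤ, p ∈ dyadicInterval k a ×ˢ dyadicInterval l b →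
      q ∈ dyadicInterval k a ×ˢ dyadicInterval l b → 2 * m ≤ a + b) :
    ENNReal.ofReal (2 ^ m) ≤ distH p q := by
  refine le_sInf ?_
  rintro _ ⟨_, ⟨_, _, ⟨k, a, rfl⟩, ⟨l, b, rfl⟩, rfl⟩, hp, hq, rfl⟩
  have hab : (2 * m : ℝ) ≤ a + b := by exact_mod_cast h k a l b hp hq
  change _ ≤ volume (dyadicInterval k a ×ˢ dyadicInterval l b) ^ _
  rw [volume_dyadicInterval_prod, ENNReal.ofReal_rpow_of_nonneg (by positivity) one_half_pos.le]
  refine ENNReal.ofReal_le_ofReal ?_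
  rw [← Real.rpow_intCast, ← Real.rpow_intCast, ← Real.rpow_mul zero_le_two]
  exact Real.rpow_le_rpow_of_exponent_le one_le_two (by push_cast; linarith)

noncomputable def hammersleyPoint (N : ℕ) (x : BitVec N) : ℝ × ℝ :=
  ((x.toNat : ℝ) / 2 ^ N, (x.reverse.toNat : ℝ) / 2 ^ N)

noncomputable def hammersleySet (N : ℕ) : Finset (ℝ × ℝ) :=
  Finset.univ.image (hammersleyPoint N)

theorem hammersleyPoint_injective (N : ℕ) : Function.Injective (hammersleyPoint N) := by
  intro x y hxy
  have := congrArg Prod.fst hxy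
  simp only [hammersleyPoint, div_left_inj' (pow_ne_zero N (two_ne_zero (α := ℝ))),
    Nat.cast_inj] at this
  exact BitVec.toNat_inj.mp this

theorem card_hammersleySet (N : ℕ) : (hammersleySet N).card = 2 ^ N := by
  rw [hammersleySet, Finset.card_image_of_injective _ (hammersleyPoint_injective N),
    Finset.card_univ, Fintype.card_congr BitVec.equivFin.toEquiv, Fintype.card_fin]

theorem hammersleySet_subset_unitSquare (N : ℕ) :
    (hammersleySet N : Set (ℝ × ℝ)) ⊆ Set.Ico 0 1 ×ˢ Set.Ico 0 1 := by
  have mem_Ico : ∀ x : BitVec N, (x.toNat : ℝ) / 2 ^ N ∈ Set.Ico (0 : ℝ) 1 := fun x =>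
    ⟨by positivity, (div_lt_one (by positivity)).mpr (by exact_mod_cast x.isLt)⟩
  rintro _ hp
  obtain ⟨x, -, rfl⟩ := Finset.mem_image.mp hp
  exact ⟨mem_Ico x, mem_Ico x.reverse⟩

theorem hammersleyPoint_eq_of_mem_dyadicInterval_prod {N : ℕ} {x y : BitVec N} {k a l b : ℤ}
    (hab : a + b + N ≤ 0)
    (hx : hammersleyPoint N x ∈ dyadicInterval k a ×ˢ dyadicInterval l b)
    (hy : hammersleyPoint N y ∈ dyadicInterval k a ×ˢ dyadicInterval l b) : x = y :=
  BitVec.eq_of_div_two_pow_eq_of_reverse (a := a + N) (b := b + N) (by omega)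
    (div_two_pow_eq_of_mem_dyadicInterval hx.1 hy.1)
    (div_two_pow_eq_of_mem_dyadicInterval hx.2 hy.2)

/-- For every `m ≥ 0` there is a set `P ⊆ [0,1)²` of cardinality `2^{2m+1}` which is
`2^{-m}`-separated with respect to `dist_H`. -/
theorem stmt3 (m : ℕ) :
    ∃ P : Finset (ℝ × ℝ),
      (↑P : Set (ℝ × ℝ)) ⊆ Set.Ico (0 : ℝ) 1 ×ˢ Set.Ico (0 : ℝ) 1 ∧
      P.card = 2 ^ (2 * m + 1) ∧
      ∀ p ∈ P, ∀ q ∈ P, p ≠ q → ENNReal.ofReal ((2 : ℝ) ^ (-(m : ℤ))) ≤ distH p q := by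
  refine ⟨hammersleySet (2 * m + 1), hammersleySet_subset_unitSquare _,
    card_hammersleySet _, ?_⟩
  simp only [hammersleySet, Finset.mem_image, Finset.mem_univ, true_and]
  rintro _ ⟨x, rfl⟩ _ ⟨y, rfl⟩ hxy
  refine ofReal_two_zpow_le_distH fun k a l b hx hy => ?_
  by_contra! hab
  exact hxy <| congrArg _ <|
    hammersleyPoint_eq_of_mem_dyadicInterval_prod (by push_cast; omega) hx hy
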